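/- Let λ > 0 and -1 < w < 1 be real constants and consider the quintessence system x' = -(3/2)[2x + (w-1)x³ + x(w+1)(y²-1) - √(2/3)λy²], y' = -(3/2)y[(w-1)x² + (w+1)(y²-1) + √(2/3)λx]. Then: (i) the zeros of the vector field with y = 0 are exactly the three points O=(0,0), A₊=(1,0) and A₋=(-1,0); (ii) the zeros with y > 0 are exactly the point B = (√(3/2)(1+w)/λ, √(3(1-w²))/(√2 λ)), together with (when λ² < 6) the point C = (λ/√6, √(1-λ²/6)); B and C coincide precisely when λ² = 3(1+w). Moreover at B one has Ω_φ = 3(1+w)/λ², w_φ = w and w_eff = w (a scaling solution), while at C one has Ω_φ = 1 and w_eff = λ²/3 - 1. -/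

import Mathlib

/-! On `y = 0` the second equation holds trivially and the first reduces to
`(1 - w) x (x - 1) (x + 1) = 0`. For `y ≠ 0`, write `k = √(2/3) λ`; eliminating `y²` between
the two equations leaves `(k x - (1 + w)) (2 x - k) = 0`. The first factor gives the scaling
point `B` with `y² = 3 (1 - w²) / (2 λ²)`, the second the field-dominated point `C` with
`y² = 1 - λ² / 6`, which has `y > 0` exactly when `λ² < 6`. -/

/-- `x`-component of the quintessence (exponential potential) vector field. -/
noncomputable def q4x (w lam x y : ℝ) : ℝ :=
  -(3 / 2) * (2 * x + (w - 1) * x ^ 3 + x * (w + 1) * (y ^ 2 - 1)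
    - Real.sqrt (2 / 3) * lam * y ^ 2)

/-- `y`-component of the quintessence (exponential potential) vector field. -/
noncomputable def q4y (w lam x y : ℝ) : ℝ :=
  -(3 / 2) * y * ((w - 1) * x ^ 2 + (w + 1) * (y ^ 2 - 1) + Real.sqrt (2 / 3) * lam * x)

/-- The scaling critical point `B`. -/
noncomputable def B4 (w lam : ℝ) : ℝ × ℝ :=
  (Real.sqrt (3 / 2) * (1 + w) / lam, Real.sqrt (3 * (1 - w ^ 2)) / (Real.sqrt 2 * lam))

/-- The scalar-field dominated critical point `C`. -/
noncomputable def C4 (lam : ℝ) : ℝ × ℝ := (lam / Real.sqrt 6, Real.sqrt (1 - lam ^ 2 / 6))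

namespace Quintessence

variable {w lam x y : ℝ}

lemma sqrt_two_thirds_mul_sqrt_three_halves : √(2 / 3) * √(3 / 2) = 1 := by
  rw [← Real.sqrt_mul (by norm_num)]
  norm_num

lemma sqrt_two_thirds_mul_sqrt_six : √(2 / 3) * √6 = 2 := by
  rw [← Real.sqrt_mul (by norm_num), show (2 / 3 : ℝ) * 6 = 2 ^ 2 by norm_num,
    Real.sqrt_sq (by norm_num)]

lemma q4x_snd_eq_zero : q4x w lam x 0 = 3 / 2 * (1 - w) * (x * ((x - 1) * (x + 1))) := by
  simp only [q4x]
  ring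

lemma q4y_snd_eq_zero : q4y w lam x 0 = 0 := by
  simp [q4y]

lemma critical_set_snd_eq_zero (hw : w ≠ 1) :
    {p : ℝ × ℝ | p.2 = 0 ∧ q4x w lam p.1 p.2 = 0 ∧ q4y w lam p.1 p.2 = 0}
      = {(0, 0), (1, 0), (-1, 0)} := by
  ext ⟨x, y⟩
  simp only [Set.mem_ofPred_eq, Set.mem_insert_iff, Set.mem_singleton_iff, Prod.mk.injEq]
  constructor
  · rintro ⟨rfl, hx, -⟩
    have h1w : 3 / 2 * (1 - w) ≠ 0 := mul_ne_zero (by norm_num) (sub_ne_zero.mpr hw.symm)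
    rw [q4x_snd_eq_zero, mul_eq_zero, or_iff_right h1w, mul_eq_zero, mul_eq_zero,
      sub_eq_zero, add_eq_zero_iff_eq_neg] at hx
    tauto
  · rintro (⟨rfl, rfl⟩ | ⟨rfl, rfl⟩ | ⟨rfl, rfl⟩) <;>
      simp only [q4x_snd_eq_zero, q4y_snd_eq_zero] <;> norm_num

lemma q4_eq_zero_cases (hlam : lam ≠ 0) (hw : w ≠ -1) (hy : y ≠ 0)
    (hx0 : q4x w lam x y = 0) (hy0 : q4y w lam x y = 0) :
    (√(2 / 3) * lam * x = 1 + w ∧ y ^ 2 = 3 * (1 - w ^ 2) / (2 * lam ^ 2)) ∨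
      (2 * x = √(2 / 3) * lam ∧ y ^ 2 = 1 - lam ^ 2 / 6) := by
  have hs : √(2 / 3) ^ 2 = 2 / 3 := Real.sq_sqrt (by norm_num)
  have hw' : w + 1 ≠ 0 := fun h => hw (by linarith)
  simp only [q4x, q4y] at hx0 hy0
  set s := √(2 / 3)
  have e1 : 2 * x + (w - 1) * x ^ 3 + x * (w + 1) * (y ^ 2 - 1) - s * lam * y ^ 2 = 0 := by
    linear_combination (-2 / 3) * hx0
  have e2 : (w - 1) * x ^ 2 + (w + 1) * (y ^ 2 - 1) + s * lam * x = 0 :=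
    (mul_eq_zero.mp hy0).resolve_left (mul_ne_zero (by norm_num) hy)
  have key : (s * lam * x - (1 + w)) * (2 * x - s * lam) = 0 := by
    linear_combination ((w + 1) * x - s * lam) * e2 - (w + 1) * e1
  have e3 : s * lam * y ^ 2 = 2 * x - s * lam * x ^ 2 := by
    linear_combination x * e2 - e1
  rcases mul_eq_zero.mp key with hB | hC
  · refine Or.inl ⟨by linear_combination hB, ?_⟩
    field_simp
    linear_combination 3 * s * lam * e3 + (6 - 3 * (s * lam * x + 1 + w)) * hB
      - 3 * lam ^ 2 * y ^ 2 * hs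
  · refine Or.inr ⟨by linear_combination hC, mul_left_cancel₀ hw' ?_⟩
    linear_combination e2 + (-(w - 1) * (x + s * lam / 2) - s * lam) / 2 * hC
      - (w + 1) * lam ^ 2 / 4 * hs

lemma q4_eq_zero_of_cases (hlam : lam ≠ 0)
    (h : (√(2 / 3) * lam * x = 1 + w ∧ y ^ 2 = 3 * (1 - w ^ 2) / (2 * lam ^ 2)) ∨
      (2 * x = √(2 / 3) * lam ∧ y ^ 2 = 1 - lam ^ 2 / 6)) :
    q4x w lam x y = 0 ∧ q4y w lam x y = 0 := by
  have hs : √(2 / 3) ^ 2 = 2 / 3 := Real.sq_sqrt (by norm_num)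
  have hk : √(2 / 3) * lam ≠ 0 := mul_ne_zero (by positivity) hlam
  simp only [q4x, q4y]
  set s := √(2 / 3)
  rcases h with ⟨hx, hy2⟩ | ⟨hx, hy2⟩
  · have hy2' : (s * lam) ^ 2 * y ^ 2 = 1 - w ^ 2 := by
      rw [hy2]
      field_simp
      linear_combination 3 * (1 - w ^ 2) * hs
    have hfy : (w - 1) * x ^ 2 + (w + 1) * (y ^ 2 - 1) + s * lam * x = 0 := by
      refine mul_left_cancel₀ (pow_ne_zero 2 hk) ?_
      linear_combination (w - 1) * (s * lam * x + 1 + w) * hx + (w + 1) * hy2'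
        + (s * lam) ^ 2 * hx
    have hfx : 2 * x + (w - 1) * x ^ 3 + x * (w + 1) * (y ^ 2 - 1) - s * lam * y ^ 2 = 0 := by
      refine mul_left_cancel₀ hk ?_
      linear_combination s * lam * x * hfy + 2 * hx - hy2' - (s * lam * x + 1 + w) * hx
    exact ⟨by linear_combination (-3 / 2) * hfx, by linear_combination (-3 / 2) * y * hfy⟩
  · have hy2' : 4 * y ^ 2 = 4 - (s * lam) ^ 2 := by
      linear_combination 4 * hy2 + lam ^ 2 * hs
    have hfy : (w - 1) * x ^ 2 + (w + 1) * (y ^ 2 - 1) + s * lam * x = 0 := by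
      refine mul_left_cancel₀ (four_ne_zero (α := ℝ)) ?_
      linear_combination ((w - 1) * (2 * x + s * lam) + 2 * s * lam) * hx + (w + 1) * hy2'
    have hfx : 2 * x + (w - 1) * x ^ 3 + x * (w + 1) * (y ^ 2 - 1) - s * lam * y ^ 2 = 0 := by
      refine mul_left_cancel₀ (four_ne_zero (α := ℝ)) ?_
      linear_combination 4 * x * hfy + 4 * hx - s * lam * hy2' - s * lam * (2 * x + s * lam) * hx
    exact ⟨by linear_combination (-3 / 2) * hfx, by linear_combination (-3 / 2) * y * hfy⟩

lemma B4_fst_mul (hlam : lam ≠ 0) : √(2 / 3) * lam * (B4 w lam).1 = 1 + w := by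
  simp only [B4]
  field_simp
  linear_combination (1 + w) * sqrt_two_thirds_mul_sqrt_three_halves

lemma B4_fst_sq : (B4 w lam).1 ^ 2 = 3 * (1 + w) ^ 2 / (2 * lam ^ 2) := by
  simp only [B4]
  rw [div_pow, mul_pow, Real.sq_sqrt (by norm_num)]
  ring

lemma B4_snd_sq (hw : w ^ 2 ≤ 1) : (B4 w lam).2 ^ 2 = 3 * (1 - w ^ 2) / (2 * lam ^ 2) := by
  simp only [B4]
  rw [div_pow, mul_pow, Real.sq_sqrt (by linarith), Real.sq_sqrt (by norm_num)]

lemma B4_fst_sq_add_snd_sq (hw : w ^ 2 ≤ 1) :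
    (B4 w lam).1 ^ 2 + (B4 w lam).2 ^ 2 = 3 * (1 + w) / lam ^ 2 := by
  rw [B4_fst_sq, B4_snd_sq hw]
  field_simp
  ring

lemma B4_fst_sq_sub_snd_sq (hw : w ^ 2 ≤ 1) :
    (B4 w lam).1 ^ 2 - (B4 w lam).2 ^ 2 = w * (3 * (1 + w) / lam ^ 2) := by
  rw [B4_fst_sq, B4_snd_sq hw]
  field_simp
  ring

lemma C4_fst_sq : (C4 lam).1 ^ 2 = lam ^ 2 / 6 := by
  rw [C4, div_pow, Real.sq_sqrt (by norm_num)]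

lemma C4_snd_sq (h : lam ^ 2 ≤ 6) : (C4 lam).2 ^ 2 = 1 - lam ^ 2 / 6 :=
  Real.sq_sqrt (by linarith)

lemma C4_fst_sq_add_snd_sq (h : lam ^ 2 ≤ 6) : (C4 lam).1 ^ 2 + (C4 lam).2 ^ 2 = 1 := by
  rw [C4_fst_sq, C4_snd_sq h]
  ring

lemma C4_fst_sq_sub_snd_sq (h : lam ^ 2 ≤ 6) :
    (C4 lam).1 ^ 2 - (C4 lam).2 ^ 2 = lam ^ 2 / 3 - 1 := by
  rw [C4_fst_sq, C4_snd_sq h]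
  ring

lemma B4_snd_pos (hlam : 0 < lam) (hw1 : -1 < w) (hw2 : w < 1) : 0 < (B4 w lam).2 := by
  have : 0 < 3 * (1 - w ^ 2) := by nlinarith
  simp only [B4]
  positivity

lemma eq_B4_iff (hlam : 0 < lam) (hw : w ^ 2 ≤ 1) (hy : 0 ≤ y) :
    (x, y) = B4 w lam ↔
      √(2 / 3) * lam * x = 1 + w ∧ y ^ 2 = 3 * (1 - w ^ 2) / (2 * lam ^ 2) := by
  have hk : √(2 / 3) * lam ≠ 0 := by positivity
  have hB : 0 ≤ (B4 w lam).2 := by simp only [B4]; positivity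
  rw [Prod.ext_iff, ← B4_fst_mul hlam.ne', mul_right_inj' hk, ← B4_snd_sq hw,
    pow_left_inj₀ hy hB two_ne_zero]

lemma eq_C4_iff (hy : 0 < y) :
    (x, y) = C4 lam ↔ 2 * x = √(2 / 3) * lam ∧ y ^ 2 = 1 - lam ^ 2 / 6 := by
  have h6 : √6 ≠ 0 := by positivity
  have hx : x = lam / √6 ↔ 2 * x = √(2 / 3) * lam := by
    rw [eq_div_iff h6]
    constructor <;> intro h
    · linear_combination √(2 / 3) * h - x * sqrt_two_thirds_mul_sqrt_six
    · linear_combination (√6 / 2) * h + (lam / 2) * sqrt_two_thirds_mul_sqrt_six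
  rw [C4, Prod.mk.injEq, hx, eq_comm (a := y), Real.sqrt_eq_iff_mul_self_eq_of_pos hy, sq y]

lemma B4_eq_C4_iff (hlam : 0 < lam) (hw1 : -1 < w) (hw2 : w < 1) :
    B4 w lam = C4 lam ↔ lam ^ 2 = 3 * (1 + w) := by
  have hs : √(2 / 3) ^ 2 = 2 / 3 := Real.sq_sqrt (by norm_num)
  have hk : √(2 / 3) * lam ≠ 0 := by positivity
  have hB := B4_fst_mul (w := w) hlam.ne'
  rw [← Prod.mk.eta (p := B4 w lam), eq_C4_iff (B4_snd_pos hlam hw1 hw2),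
    B4_snd_sq (by nlinarith)]
  constructor
  · rintro ⟨h, -⟩
    linear_combination (-(3 / 2) * √(2 / 3) * lam) * h + 3 * hB - (3 / 2) * lam ^ 2 * hs
  · intro hL
    refine ⟨mul_left_cancel₀ hk ?_, ?_⟩
    · linear_combination 2 * hB - lam ^ 2 * hs - (2 / 3) * hL
    · field_simp
      linear_combination (2 * lam ^ 2 + 6 * w - 6) * hL

lemma critical_set_snd_pos (hlam : 0 < lam) (hw1 : -1 < w) (hw2 : w < 1) :
    {p : ℝ × ℝ | 0 < p.2 ∧ q4x w lam p.1 p.2 = 0 ∧ q4y w lam p.1 p.2 = 0}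
      = {p | p = B4 w lam ∨ (p = C4 lam ∧ lam ^ 2 < 6)} := by
  have hw : w ^ 2 ≤ 1 := by nlinarith
  ext ⟨x, y⟩
  simp only [Set.mem_ofPred_eq]
  constructor
  · rintro ⟨hy, hx0, hy0⟩
    rcases q4_eq_zero_cases hlam.ne' hw1.ne' hy.ne' hx0 hy0 with hB | hC
    · exact Or.inl ((eq_B4_iff hlam hw hy.le).mpr hB)
    · exact Or.inr ⟨(eq_C4_iff hy).mpr hC, by nlinarith [hC.2]⟩
  · rintro (hB | ⟨hC, hlt⟩)
    · have hy : 0 < y := by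
        rw [show y = (B4 w lam).2 from congrArg Prod.snd hB]
        exact B4_snd_pos hlam hw1 hw2
      exact ⟨hy, q4_eq_zero_of_cases hlam.ne' (Or.inl ((eq_B4_iff hlam hw hy.le).mp hB))⟩
    · have hy : 0 < y := by
        rw [show y = (C4 lam).2 from congrArg Prod.snd hC]
        exact Real.sqrt_pos.mpr (by linarith)
      exact ⟨hy, q4_eq_zero_of_cases hlam.ne' (Or.inr ((eq_C4_iff hy).mp hC))⟩

end Quintessence

/-- Critical points of the quintessence system with exponential potential: on `y = 0` exactly
`O, A₊, A₋`; for `y > 0` exactly `B` together with `C` when `λ² < 6`; `B = C` iff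
`λ² = 3(1+w)`; at `B` one has `Ω_φ = 3(1+w)/λ²`, `w_φ = w`, `w_eff = w`, and at `C`
one has `Ω_φ = 1`, `w_eff = λ²/3 - 1`. -/
theorem quintessence_critical_points (w lam : ℝ) (hlam : 0 < lam) (hw1 : -1 < w) (hw2 : w < 1) :
    ({p : ℝ × ℝ | p.2 = 0 ∧ q4x w lam p.1 p.2 = 0 ∧ q4y w lam p.1 p.2 = 0}
        = {(0, 0), (1, 0), (-1, 0)}) ∧
    (lam ^ 2 < 6 →
      {p : ℝ × ℝ | 0 < p.2 ∧ q4x w lam p.1 p.2 = 0 ∧ q4y w lam p.1 p.2 = 0}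
        = {B4 w lam, C4 lam}) ∧
    (6 ≤ lam ^ 2 →
      {p : ℝ × ℝ | 0 < p.2 ∧ q4x w lam p.1 p.2 = 0 ∧ q4y w lam p.1 p.2 = 0} = {B4 w lam}) ∧
    (B4 w lam = C4 lam ↔ lam ^ 2 = 3 * (1 + w)) ∧
    ((B4 w lam).1 ^ 2 + (B4 w lam).2 ^ 2 = 3 * (1 + w) / lam ^ 2) ∧
    (((B4 w lam).1 ^ 2 - (B4 w lam).2 ^ 2) / ((B4 w lam).1 ^ 2 + (B4 w lam).2 ^ 2) = w) ∧
    ((B4 w lam).1 ^ 2 - (B4 w lam).2 ^ 2 + w * (1 - (B4 w lam).1 ^ 2 - (B4 w lam).2 ^ 2) = w) ∧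
    (lam ^ 2 < 6 →
      (C4 lam).1 ^ 2 + (C4 lam).2 ^ 2 = 1 ∧
      (C4 lam).1 ^ 2 - (C4 lam).2 ^ 2 + w * (1 - (C4 lam).1 ^ 2 - (C4 lam).2 ^ 2)
        = lam ^ 2 / 3 - 1) := by
  have hw : w ^ 2 ≤ 1 := by nlinarith
  have hΩB := Quintessence.B4_fst_sq_add_snd_sq (lam := lam) hw
  have hΔB := Quintessence.B4_fst_sq_sub_snd_sq (lam := lam) hw
  refine ⟨Quintessence.critical_set_snd_eq_zero hw2.ne, fun hlt => ?_, fun hge => ?_,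
    Quintessence.B4_eq_C4_iff hlam hw1 hw2, hΩB, ?_, by linear_combination hΔB - w * hΩB,
    fun hlt => ?_⟩
  · rw [Quintessence.critical_set_snd_pos hlam hw1 hw2]
    ext p
    simp [hlt]
  · rw [Quintessence.critical_set_snd_pos hlam hw1 hw2]
    ext p
    simp [not_lt.mpr hge]
  · rw [hΔB, hΩB, mul_div_cancel_right₀ w (div_ne_zero (by linarith) (by positivity))]
  · have hΩC := Quintessence.C4_fst_sq_add_snd_sq hlt.le
    have hΔC := Quintessence.C4_fst_sq_sub_snd_sq hlt.le
    exact ⟨hΩC, by linear_combination hΔC - w * hΩC⟩
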